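/- Under SCAR and the PU condition, the conditional distributions of X given S=1 and of X given S=-1 coincide if and only if the conditional distributions of X given Y=1 and of X given Y=-1 coincide, provided 0 < π < 1 and 0 < c < 1 where π = P(Y=1), c = P(S=1|Y=1). -/
import Mathlib


open scoped Classical
open Finset

/-- Probability of an event `A` under pmf `P` on a finite sample space. -/
noncomputable def pr {Ω : Type*} [Fintype Ω] (P : Ω → ℝ) (A : Ω → Prop) : ℝ :=
  ∑ ω, if A ω then P ω else 0

/-- Conditional expectation `E[f | A]` under pmf `P`. -/
noncomputable def cex {Ω : Type*} [Fintype Ω] (P : Ω → ℝ) (A : Ω → Prop) (f : Ω → ℝ) : ℝ :=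
  (∑ ω, if A ω then P ω * f ω else 0) / pr P A

/-- Expectation `E[f]` under pmf `P`. -/
noncomputable def ex {Ω : Type*} [Fintype Ω] (P : Ω → ℝ) (f : Ω → ℝ) : ℝ :=
  ∑ ω, P ω * f ω

lemma pr_nonneg {Ω : Type*} [Fintype Ω] (P : Ω → ℝ) (hP : ∀ ω, 0 ≤ P ω) (A : Ω → Prop) :
    0 ≤ pr P A := by
  unfold pr
  apply Finset.sum_nonneg
  intro ω _
  split
  · exact hP ω
  · exact le_rfl

lemma pr_congr {Ω : Type*} [Fintype Ω] (P : Ω → ℝ) {A B : Ω → Prop}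
    (h : ∀ ω, A ω ↔ B ω) : pr P A = pr P B := by
  unfold pr
  apply Finset.sum_congr rfl
  intro ω _
  simp [h ω]

lemma pr_mono {Ω : Type*} [Fintype Ω] (P : Ω → ℝ) (hP : ∀ ω, 0 ≤ P ω) {A B : Ω → Prop}
    (h : ∀ ω, A ω → B ω) : pr P A ≤ pr P B := by
  unfold pr
  apply Finset.sum_le_sum
  intro ω _
  by_cases hA : A ω
  · simp [hA, h ω hA]
  · by_cases hB : B ω <;> simp [hA, hB, hP ω]

lemma pr_split {Ω : Type*} [Fintype Ω] (P : Ω → ℝ) (A B : Ω → Prop) :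
    pr P A = pr P (fun ω => A ω ∧ B ω) + pr P (fun ω => A ω ∧ ¬ B ω) := by
  unfold pr
  rw [← Finset.sum_add_distrib]
  apply Finset.sum_congr rfl
  intro ω _
  by_cases hA : A ω <;> by_cases hB : B ω <;> simp [hA, hB]

theorem stmt10 {Ω 𝒳 : Type*} [Fintype Ω] [Fintype 𝒳]
    (P : Ω → ℝ) (hP : ∀ ω, 0 ≤ P ω) (hPsum : ∑ ω, P ω = 1)
    (X : Ω → 𝒳) (Y S : Ω → ℤ)
    (hY : ∀ ω, Y ω = 1 ∨ Y ω = -1) (hS : ∀ ω, S ω = 1 ∨ S ω = -1)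
    (hPU : pr P (fun ω => Y ω = -1 ∧ S ω = 1) = 0)
    (π c : ℝ)
    (hπ : π = pr P (fun ω => Y ω = 1))
    (hc : c = pr P (fun ω => S ω = 1 ∧ Y ω = 1) / pr P (fun ω => Y ω = 1))
    (hπ0 : 0 < π) (hπ1 : π < 1) (hc0 : 0 < c) (hc1 : c < 1)
    (hSCAR : ∀ x : 𝒳, 0 < pr P (fun ω => Y ω = 1 ∧ X ω = x) →
      pr P (fun ω => S ω = 1 ∧ Y ω = 1 ∧ X ω = x) / pr P (fun ω => Y ω = 1 ∧ X ω = x)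
        = pr P (fun ω => S ω = 1 ∧ Y ω = 1) / pr P (fun ω => Y ω = 1)) :
    (∀ x : 𝒳, pr P (fun ω => X ω = x ∧ S ω = 1) / pr P (fun ω => S ω = 1)
        = pr P (fun ω => X ω = x ∧ S ω = -1) / pr P (fun ω => S ω = -1))
    ↔ (∀ x : 𝒳, pr P (fun ω => X ω = x ∧ Y ω = 1) / pr P (fun ω => Y ω = 1)
        = pr P (fun ω => X ω = x ∧ Y ω = -1) / pr P (fun ω => Y ω = -1)) := by
  set a : 𝒳 → ℝ := fun x => pr P (fun ω => Y ω = 1 ∧ X ω = x) with ha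
  set m : 𝒳 → ℝ := fun x => pr P (fun ω => X ω = x) with hm
  have e6 : pr P (fun ω => Y ω = 1) = π := hπ.symm
  have hcq : pr P (fun ω => S ω = 1 ∧ Y ω = 1) = c * π := by
    rw [e6] at hc
    exact (div_eq_iff hπ0.ne').mp hc.symm
  have hPU' : pr P (fun ω => S ω = 1 ∧ Y ω = -1) = 0 := by
    rw [pr_congr P (fun ω => and_comm)]
    exact hPU
  -- P(S=1 ∧ Y=1 ∧ X=x) = c * a x
  have eS1 : ∀ x, pr P (fun ω => S ω = 1 ∧ Y ω = 1 ∧ X ω = x) = c * a x := by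
    intro x
    rcases lt_or_eq_of_le (pr_nonneg P hP (fun ω => Y ω = 1 ∧ X ω = x)) with hpos | hzero
    · have h := hSCAR x hpos
      rw [hcq, e6, mul_div_assoc, div_self hπ0.ne', mul_one] at h
      exact (div_eq_iff hpos.ne').mp h
    · have hle : pr P (fun ω => S ω = 1 ∧ Y ω = 1 ∧ X ω = x) ≤
          pr P (fun ω => Y ω = 1 ∧ X ω = x) :=
        pr_mono P hP (fun ω h => h.2)
      have hge := pr_nonneg P hP (fun ω => S ω = 1 ∧ Y ω = 1 ∧ X ω = x)
      have : a x = 0 := hzero.symm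
      rw [this, mul_zero]
      rw [← hzero] at hle
      linarith
  have e1 : ∀ x, pr P (fun ω => X ω = x ∧ S ω = 1) = c * a x := by
    intro x
    rw [pr_split P (fun ω => X ω = x ∧ S ω = 1) (fun ω => Y ω = 1)]
    have h2 : pr P (fun ω => (X ω = x ∧ S ω = 1) ∧ ¬ Y ω = 1) = 0 := by
      have hle : pr P (fun ω => (X ω = x ∧ S ω = 1) ∧ ¬ Y ω = 1) ≤
          pr P (fun ω => S ω = 1 ∧ Y ω = -1) := by
        apply pr_mono P hP
        intro ω h
        exact ⟨h.1.2, (hY ω).resolve_left h.2⟩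
      have hge := pr_nonneg P hP (fun ω => (X ω = x ∧ S ω = 1) ∧ ¬ Y ω = 1)
      linarith [hPU' ▸ hle]
    have h1 : pr P (fun ω => (X ω = x ∧ S ω = 1) ∧ Y ω = 1) =
        pr P (fun ω => S ω = 1 ∧ Y ω = 1 ∧ X ω = x) := by
      apply pr_congr
      intro ω
      tauto
    rw [h1, h2, eS1 x, add_zero]
  have e2 : pr P (fun ω => S ω = 1) = c * π := by
    rw [pr_split P (fun ω => S ω = 1) (fun ω => Y ω = 1)]
    have h2 : pr P (fun ω => S ω = 1 ∧ ¬ Y ω = 1) = 0 := by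
      have hle : pr P (fun ω => S ω = 1 ∧ ¬ Y ω = 1) ≤
          pr P (fun ω => S ω = 1 ∧ Y ω = -1) := by
        apply pr_mono P hP
        intro ω h
        exact ⟨h.1, (hY ω).resolve_left h.2⟩
      have hge := pr_nonneg P hP (fun ω => S ω = 1 ∧ ¬ Y ω = 1)
      linarith [hPU' ▸ hle]
    rw [hcq, h2, add_zero]
  have etot : pr P (fun _ : Ω => True) = 1 := by
    unfold pr; simpa using hPsum
  have e4 : pr P (fun ω => S ω = -1) = 1 - c * π := by
    have := pr_split P (fun _ : Ω => True) (fun ω => S ω = 1)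
    rw [etot] at this
    have h1 : pr P (fun ω => True ∧ S ω = 1) = c * π := by
      rw [pr_congr P (fun ω => by simp : ∀ ω, (True ∧ S ω = 1) ↔ S ω = 1)]
      exact e2
    have h2 : pr P (fun ω => True ∧ ¬ S ω = 1) = pr P (fun ω => S ω = -1) := by
      apply pr_congr
      intro ω
      constructor
      · intro h; exact (hS ω).resolve_left h.2
      · intro h; exact ⟨trivial, by rw [h]; decide⟩
    rw [h1, h2] at this
    linarith
  have e3 : ∀ x, pr P (fun ω => X ω = x ∧ S ω = -1) = m x - c * a x := by
    intro x
    have := pr_split P (fun ω => X ω = x) (fun ω => S ω = 1)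
    have h1 : pr P (fun ω => X ω = x ∧ S ω = 1) = c * a x := e1 x
    have h2 : pr P (fun ω => X ω = x ∧ ¬ S ω = 1) = pr P (fun ω => X ω = x ∧ S ω = -1) := by
      apply pr_congr
      intro ω
      constructor
      · intro h; exact ⟨h.1, (hS ω).resolve_left h.2⟩
      · intro h; exact ⟨h.1, by rw [h.2]; decide⟩
    rw [h1, h2] at this
    simp only [hm]
    linarith
  have e5 : ∀ x, pr P (fun ω => X ω = x ∧ Y ω = 1) = a x := by
    intro x
    apply pr_congr
    intro ω
    exact and_comm
  have e7 : ∀ x, pr P (fun ω => X ω = x ∧ Y ω = -1) = m x - a x := by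
    intro x
    have := pr_split P (fun ω => X ω = x) (fun ω => Y ω = 1)
    have h2 : pr P (fun ω => X ω = x ∧ ¬ Y ω = 1) = pr P (fun ω => X ω = x ∧ Y ω = -1) := by
      apply pr_congr
      intro ω
      constructor
      · intro h; exact ⟨h.1, (hY ω).resolve_left h.2⟩
      · intro h; exact ⟨h.1, by rw [h.2]; decide⟩
    rw [e5 x, h2] at this
    simp only [hm]
    linarith
  have e8 : pr P (fun ω => Y ω = -1) = 1 - π := by
    have := pr_split P (fun _ : Ω => True) (fun ω => Y ω = 1)
    rw [etot] at this
    have h1 : pr P (fun ω => True ∧ Y ω = 1) = π := by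
      rw [pr_congr P (fun ω => by simp : ∀ ω, (True ∧ Y ω = 1) ↔ Y ω = 1)]
      exact e6
    have h2 : pr P (fun ω => True ∧ ¬ Y ω = 1) = pr P (fun ω => Y ω = -1) := by
      apply pr_congr
      intro ω
      constructor
      · intro h; exact (hY ω).resolve_left h.2
      · intro h; exact ⟨trivial, by rw [h]; decide⟩
    rw [h1, h2] at this
    linarith
  have hcπ0 : 0 < c * π := mul_pos hc0 hπ0
  have hcπ1 : c * π < 1 := by nlinarith
  constructor
  · intro h x
    have hx := h x
    rw [e1 x, e2, e3 x, e4] at hx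
    rw [e5 x, e6, e7 x, e8]
    rw [div_eq_div_iff hcπ0.ne' (by linarith)] at hx
    rw [div_eq_div_iff hπ0.ne' (by linarith : (0:ℝ) < 1 - π).ne']
    have h2 : a x = π * m x :=
      mul_left_cancel₀ hc0.ne' (by linear_combination hx)
    linear_combination h2
  · intro h x
    have hx := h x
    rw [e5 x, e6, e7 x, e8] at hx
    rw [e1 x, e2, e3 x, e4]
    rw [div_eq_div_iff hπ0.ne' (by linarith : (0:ℝ) < 1 - π).ne'] at hx
    rw [div_eq_div_iff hcπ0.ne' (by linarith)]
    linear_combination c * hx
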